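/- Let k ≥ 2, let Π = {P_1,…,P_k} be a k-partition of [m], let ψ : I → J be a fold of [m] such that |I| ≥ 2 and there is no l ∈ [k] with I ∪ J ⊆ P_l, and let L_ψ denote the complex L_ψ associated to K_Π and ψ. Then L_ψ = Δ[[m]], the full simplex on [m]: every subset of [m] is a face of L_ψ. -/

import Mathlib

open scoped Classical

/-- `ψ` (already extended to all of `V` by the identity off `I`) is a fold of the
vertex set with disjoint source `I` and target `J`, surjective from `I` onto `J`. -/
def IsFold {V : Type*} (I J : Finset V) (ψ : V → V) : Prop :=
  Disjoint I J ∧ (∀ v ∈ I, ψ v ∈ J) ∧ (∀ v ∉ I, ψ v = v) ∧ ∀ w ∈ J, ∃ v ∈ I, ψ v = w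

/-- The folded complex of `K` under the extended fold map `ψ`: its faces are exactly
the images `ψ(σ)` of faces `σ` of `K`. -/
def foldFaces {V : Type*} [DecidableEq V] (K : Set (Finset V)) (f : V → V) :
    Set (Finset V) :=
  {τ | ∃ σ ∈ K, τ = σ.image f}

/-- The identity complex `K_Π` of a `k`-partition `Π = {P 1, …, P k}` of `[m]`:
`σ ⊆ [m]` is a face if and only if at most `k - 2` of the parts `P i` satisfy
`P i ⊆ σ`. -/
def KPiFaces {m k : ℕ} (P : Fin k → Finset (Fin m)) : Set (Finset (Fin m)) :=
  {σ | (Finset.univ.filter fun i => P i ⊆ σ).card ≤ k - 2}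

/-- The complex `L_ψ = K_{∇(I,J)}⟨Δ[{k_1} ⊔ I_{k_1}], …, Δ[{k_l} ⊔ I_{k_l}]⟩` on `[m]`:
substitution of the full simplices on the blocks `{t} ⊔ ψ⁻¹(t)` (for `t ∈ [m]∖I`)
into the folded complex `K_{∇(I,J)}`. -/
def LpsiFaces {m : ℕ} (K : Set (Finset (Fin m))) (I : Finset (Fin m))
    (ψ : Fin m → Fin m) : Set (Finset (Fin m)) :=
  {F | ∃ σ : Fin m → Finset (Fin m),
    (∀ t ∉ I, σ t ⊆ insert t (I.filter fun w => ψ w = t)) ∧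
    F = (Finset.univ \ I).biUnion σ ∧
    ((Finset.univ \ I).filter fun t => (σ t).Nonempty) ∈ foldFaces K ψ}

/-! A face `F` of `Δ[[m]]` is realised in `L_ψ` by cutting it along the blocks `{t} ⊔ ψ⁻¹(t)`;
the nonempty blocks form a set `T` disjoint from `I`, so it suffices that every such `T` is a
face of the folded complex `(K_Π)_{∇(I,J)}`. Since `ψ` fixes `T`, `T` itself works as soon as two
distinct parts each have a vertex outside `T`. If `I` meets two parts, points of `I` give them.
Otherwise `I ⊆ P l`, and some `x ∈ J` lies outside `P l`; if `x ∉ T` use `P l` and the part of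
`x`, and if `x ∈ T` replace `x` by a preimage `w ∈ I`: the face `(T ∖ {x}) ∪ {w}` still maps
onto `T`, misses `x`, and misses a second point of `I ⊆ P l` because `|I| ≥ 2`. -/

open Finset

theorem mem_KPiFaces_of_not_subset {m k : ℕ} {P : Fin k → Finset (Fin m)} {s : Finset (Fin m)}
    {i j : Fin k} (hij : i ≠ j) (hi : ¬P i ⊆ s) (hj : ¬P j ⊆ s) : s ∈ KPiFaces P := by
  have hsub : (univ.filter fun i => P i ⊆ s) ⊆ univ \ {i, j} := by
    intro x hx
    simp only [mem_filter, mem_univ, true_and] at hx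
    simp only [mem_sdiff, mem_univ, true_and, mem_insert, mem_singleton]
    rintro (rfl | rfl)
    exacts [hi hx, hj hx]
  calc (univ.filter fun i => P i ⊆ s).card
      ≤ (univ \ {i, j}).card := card_le_card hsub
    _ = k - 2 := by
      rw [card_sdiff_of_subset (subset_univ _), card_univ, Fintype.card_fin, card_pair hij]

namespace IsFold

variable {V : Type*} {I J : Finset V} {ψ : V → V}

theorem apply_of_notMem (hψ : IsFold I J ψ) {v : V} (hv : v ∉ I) : ψ v = v :=
  hψ.2.2.1 v hv

theorem apply_notMem (hψ : IsFold I J ψ) {v : V} (hv : v ∈ I) : ψ v ∉ I :=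
  disjoint_right.mp hψ.1 (hψ.2.1 v hv)

theorem image_eq_self [DecidableEq V] (hψ : IsFold I J ψ) {s : Finset V} (hs : Disjoint s I) :
    s.image ψ = s := by
  rw [image_congr (f := ψ) (g := id) fun v hv => hψ.apply_of_notMem (disjoint_left.mp hs hv), image_id]

theorem image_insert_erase [DecidableEq V] (hψ : IsFold I J ψ) {s : Finset V} (hs : Disjoint s I) {w : V}
    (hw : ψ w ∈ s) : (insert w (s.erase (ψ w))).image ψ = s := by
  rw [image_insert, hψ.image_eq_self (disjoint_of_subset_left (erase_subset _ _) hs),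
    insert_erase hw]

end IsFold

theorem mem_LpsiFaces_of_forall_disjoint {m : ℕ} {K : Set (Finset (Fin m))}
    {I J : Finset (Fin m)} {ψ : Fin m → Fin m} (hψ : IsFold I J ψ)
    (hK : ∀ T : Finset (Fin m), Disjoint T I → T ∈ foldFaces K ψ) (F : Finset (Fin m)) :
    F ∈ LpsiFaces K I ψ := by
  refine ⟨fun t => F ∩ insert t (I.filter fun w => ψ w = t), fun _ _ => inter_subset_right,
    ?_, hK _ (disjoint_left.mpr fun t ht => (mem_sdiff.mp (mem_filter.mp ht).1).2)⟩
  ext v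
  simp only [mem_biUnion, mem_sdiff, mem_univ, true_and, mem_inter, mem_insert, mem_filter]
  refine ⟨fun hv => ?_, fun ⟨_, _, hv, _⟩ => hv⟩
  by_cases hvI : v ∈ I
  · exact ⟨ψ v, hψ.apply_notMem hvI, hv, Or.inr ⟨hvI, rfl⟩⟩
  · exact ⟨v, hvI, hv, Or.inl rfl⟩

section KPiFaces

variable {m k : ℕ} {P : Fin k → Finset (Fin m)} {I J : Finset (Fin m)} {ψ : Fin m → Fin m}
  {T : Finset (Fin m)}

theorem self_mem_foldFaces_KPiFaces (hψ : IsFold I J ψ) (hT : Disjoint T I) {i j : Fin k}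
    (hij : i ≠ j) (hi : ¬P i ⊆ T) (hj : ¬P j ⊆ T) : T ∈ foldFaces (KPiFaces P) ψ :=
  ⟨T, mem_KPiFaces_of_not_subset hij hi hj, (hψ.image_eq_self hT).symm⟩

theorem mem_foldFaces_KPiFaces_of_subset (hψ : IsFold I J ψ) (hI : 2 ≤ I.card)
    (hT : Disjoint T I) {i l : Fin k} (hil : i ≠ l) (hl : I ⊆ P l) {x : Fin m} (hxJ : x ∈ J)
    (hxi : x ∈ P i) (hxl : x ∉ P l) : T ∈ foldFaces (KPiFaces P) ψ := by
  by_cases hxT : x ∈ T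
  · obtain ⟨w, hwI, rfl⟩ := hψ.2.2.2 x hxJ
    obtain ⟨a, haI, haw⟩ := exists_mem_ne hI w
    refine ⟨_, mem_KPiFaces_of_not_subset hil (fun h => ?_) fun h => ?_,
      (hψ.image_insert_erase hT hxT).symm⟩
    · rcases mem_insert.mp (h hxi) with hw | hw
      · exact (hw ▸ hψ.apply_notMem hwI) hwI
      · exact notMem_erase _ _ hw
    · rcases mem_insert.mp (h (hl haI)) with h | h
      · exact haw h
      · exact disjoint_left.mp hT (mem_of_mem_erase h) haI
  · obtain ⟨a, haI⟩ := card_pos.mp (by omega : 0 < I.card)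
    exact self_mem_foldFaces_KPiFaces hψ hT hil (fun h => hxT (h hxi))
      fun h => disjoint_left.mp hT (h (hl haI)) haI

theorem mem_foldFaces_KPiFaces_of_disjoint (hcov : univ.biUnion P = univ)
    (hψ : IsFold I J ψ) (hI : 2 ≤ I.card) (hnl : ¬∃ l : Fin k, I ∪ J ⊆ P l)
    (hT : Disjoint T I) : T ∈ foldFaces (KPiFaces P) ψ := by
  choose part hpart using fun v => mem_biUnion.mp (hcov ▸ mem_univ v : v ∈ univ.biUnion P)
  have part_ne {v : Fin m} {l : Fin k} (hv : v ∉ P l) : part v ≠ l :=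
    fun h => hv (h ▸ (hpart v).2)
  by_cases hone : ∃ l, I ⊆ P l
  · obtain ⟨l, hl⟩ := hone
    obtain ⟨x, hx, hxl⟩ := not_subset.mp fun h => hnl ⟨l, h⟩
    have hxJ : x ∈ J := (mem_union.mp hx).resolve_left fun h => hxl (hl h)
    exact mem_foldFaces_KPiFaces_of_subset hψ hI hT (part_ne hxl) hl hxJ (hpart x).2 hxl
  · obtain ⟨a, haI⟩ := card_pos.mp (by omega : 0 < I.card)
    obtain ⟨b, hbI, hb⟩ := not_subset.mp fun h => hone ⟨part a, h⟩
    have not_subset_of_mem {v : Fin m} (hv : v ∈ I) : ¬P (part v) ⊆ T :=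
      fun h => disjoint_left.mp hT (h (hpart v).2) hv
    exact self_mem_foldFaces_KPiFaces hψ hT (part_ne hb) (not_subset_of_mem hbI)
      (not_subset_of_mem haI)

end KPiFaces

theorem Lpsi_KPi_full_simplex_general {m k : ℕ} (P : Fin k → Finset (Fin m))
    (hcov : Finset.univ.biUnion P = Finset.univ)
    (I J : Finset (Fin m)) (ψ : Fin m → Fin m) (hψ : IsFold I J ψ)
    (hI : 2 ≤ I.card) (hnl : ¬∃ l : Fin k, I ∪ J ⊆ P l)
    (F : Finset (Fin m)) :
    F ∈ LpsiFaces (KPiFaces P) I ψ :=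
  mem_LpsiFaces_of_forall_disjoint hψ
    (fun _ hT => mem_foldFaces_KPiFaces_of_disjoint hcov hψ hI hnl hT) F

/-- If `|I| ≥ 2` and there is no part `P l` with `I ∪ J ⊆ P l`, then the complex
`L_ψ` associated to `K_Π` and `ψ` is the full simplex `Δ[[m]]`: every subset of `[m]`
is a face of `L_ψ`. -/
theorem Lpsi_KPi_full_simplex {m k : ℕ} (hk : 2 ≤ k) (P : Fin k → Finset (Fin m))
    (hne : ∀ i, (P i).Nonempty)
    (hdisj : ∀ i j, i ≠ j → Disjoint (P i) (P j))
    (hcov : Finset.univ.biUnion P = Finset.univ)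
    (I J : Finset (Fin m)) (ψ : Fin m → Fin m) (hψ : IsFold I J ψ)
    (hI : 2 ≤ I.card) (hnl : ¬∃ l : Fin k, I ∪ J ⊆ P l)
    (F : Finset (Fin m)) :
    F ∈ LpsiFaces (KPiFaces P) I ψ :=
  Lpsi_KPi_full_simplex_general P hcov I J ψ hψ hI hnl F
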